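/- arXiv:2408.08602 — 4 statements merged into one kernel-verified Lean document; each statement's English description precedes it below -/
import Mathlib

section
/- Under Assumptions A2 and A3a, every trajectory of the discrete-time higher-order SIS map F with x_i(0) ∈ [0,1] for all i satisfies x_i(t) ∈ [0,1] for all i ∈ {1,…,n} and all t ≥ 0; that is, the cube [0,1]^n is positively invariant under F. -/
open Finset Filter

/-- Spectral radius of a real square matrix: the maximum modulus of its complex
eigenvalues (elements of the spectrum of the matrix viewed over `ℂ`). -/
noncomputable def specRad {n : ℕ} (M : Matrix (Fin n) (Fin n) ℝ) : ℝ :=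
  sSup ((fun z => ‖z‖) '' spectrum ℂ (M.map (fun a => (a : ℂ))))

/-- A nonnegative matrix is irreducible: there is no nonempty proper subset `S` of the
index set with `M i j = 0` for all `i ∈ S` and `j ∉ S`. -/
def MatIrred {n : ℕ} (M : Matrix (Fin n) (Fin n) ℝ) : Prop :=
  ∀ S : Set (Fin n), S.Nonempty → S ≠ Set.univ → ∃ i ∈ S, ∃ j, j ∉ S ∧ M i j ≠ 0

/-- A nonnegative `n×n×n` array is irreducible: there is no nonempty proper subset `S`
with `H i j k = 0` for all `i ∈ S` and `j, k ∉ S`. -/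
def TensIrred {n : ℕ} (H : Fin n → Fin n → Fin n → ℝ) : Prop :=
  ∀ S : Set (Fin n), S.Nonempty → S ≠ Set.univ →
    ∃ i ∈ S, ∃ j k, j ∉ S ∧ k ∉ S ∧ H i j k ≠ 0

/-- The discrete-time higher-order SIS map
`F(x)_i = x_i + h(−δ_i x_i + (1−x_i)(Σ_j β_{ij} x_j + Σ_{j,k} β_{ijk} x_j x_k))`. -/
noncomputable def SIS {n : ℕ} (h : ℝ) (δ : Fin n → ℝ) (B : Matrix (Fin n) (Fin n) ℝ)
    (H : Fin n → Fin n → Fin n → ℝ) (x : Fin n → ℝ) : Fin n → ℝ := fun i =>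
  x i + h * (-(δ i * x i) +
    (1 - x i) * ((∑ j, B i j * x j) + ∑ j, ∑ k, H i j k * x j * x k))

/-- `x` is a trajectory of the discrete-time system `x(t+1) = F(x(t))`. -/
def IsTraj {n : ℕ} (F : (Fin n → ℝ) → Fin n → ℝ) (x : ℕ → Fin n → ℝ) : Prop :=
  ∀ t, x (t + 1) = F (x t)

/-- Membership in the cube `[0,1]^n`. -/
def InCube {n : ℕ} (y : Fin n → ℝ) : Prop := ∀ i, y i ∈ Set.Icc (0 : ℝ) 1

/-- Local asymptotic stability (max-norm) of an equilibrium `xb`, for trajectories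
starting in `[0,1]^n`. -/
def LocAsympStable {n : ℕ} (F : (Fin n → ℝ) → Fin n → ℝ) (xb : Fin n → ℝ) : Prop :=
  ∀ ε > 0, ∃ d > 0, ∀ x : ℕ → Fin n → ℝ, IsTraj F x → InCube (x 0) → ‖x 0 - xb‖ < d →
    (∀ t, ‖x t - xb‖ < ε) ∧ Tendsto x atTop (nhds xb)

/-- Instability (max-norm) of an equilibrium `xb`, for trajectories starting in `[0,1]^n`. -/
def Unstable {n : ℕ} (F : (Fin n → ℝ) → Fin n → ℝ) (xb : Fin n → ℝ) : Prop :=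
  ∃ ε > 0, ∀ d > 0, ∃ x : ℕ → Fin n → ℝ, IsTraj F x ∧ InCube (x 0) ∧ ‖x 0 - xb‖ < d ∧
    ∃ t, ε ≤ ‖x t - xb‖

/- Each coordinate of `F(x)` equals `x_i (1 - hδ_i) + (1 - x_i) h p_i(x)`, where `p_i(x)` is the
infection pressure `Σ_j β_{ij} x_j + Σ_{j,k} β_{ijk} x_j x_k`. On the cube,
`0 ≤ p_i(x) ≤ Σ_j β_{ij} + Σ_{j,k} β_{ijk}`, so by A3a both `hδ_i` and `h p_i(x)` lie in `[0,1]`,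
and the coordinate lies between `0` and `x_i + (1 - x_i) = 1`. -/
lemma sum_mul_mem_Icc_sum {ι : Type*} [Fintype ι] (w y : ι → ℝ) (hw : ∀ i, 0 ≤ w i)
    (hy : ∀ i, y i ∈ Set.Icc (0 : ℝ) 1) :
    ∑ i, w i * y i ∈ Set.Icc 0 (∑ i, w i) :=
  ⟨sum_nonneg fun i _ => mul_nonneg (hw i) (hy i).1,
    sum_le_sum fun i _ => mul_le_of_le_one_right (hw i) (hy i).2⟩

lemma sum_sum_mul_mul_mem_Icc_sum_sum {ι : Type*} [Fintype ι] (w : ι → ι → ℝ) (y : ι → ℝ)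
    (hw : ∀ j k, 0 ≤ w j k) (hy : ∀ i, y i ∈ Set.Icc (0 : ℝ) 1) :
    ∑ j, ∑ k, w j k * y j * y k ∈ Set.Icc 0 (∑ j, ∑ k, w j k) := by
  simp only [mul_assoc, ← Fintype.sum_prod_type']
  exact sum_mul_mem_Icc_sum (fun p : ι × ι => w p.1 p.2) (fun p => y p.1 * y p.2)
    (fun p => hw p.1 p.2) fun p => unitInterval.mul_mem (hy p.1) (hy p.2)

lemma add_mul_neg_mul_add_mul_mem_Icc {h d p y : ℝ} (hh : 0 ≤ h) (hd : 0 ≤ d)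
    (hhd : h * d ≤ 1) (hp : 0 ≤ p) (hhp : h * p ≤ 1) (hy : y ∈ Set.Icc (0 : ℝ) 1) :
    y + h * (-(d * y) + (1 - y) * p) ∈ Set.Icc 0 1 := by
  obtain ⟨hy0, hy1⟩ := hy
  have hsplit : y + h * (-(d * y) + (1 - y) * p) = y * (1 - h * d) + (1 - y) * (h * p) := by
    ring
  rw [hsplit]
  constructor
  · nlinarith [mul_nonneg hh hp]
  · nlinarith [mul_nonneg hh hd, mul_nonneg hh hp]

lemma inCube_SIS {n : ℕ} {h : ℝ} (hh : 0 ≤ h) {δ : Fin n → ℝ} {B : Matrix (Fin n) (Fin n) ℝ}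
    {H : Fin n → Fin n → Fin n → ℝ} (hδ : ∀ i, 0 ≤ δ i) (hB : ∀ i j, 0 ≤ B i j)
    (hH : ∀ i j k, 0 ≤ H i j k)
    (hA3a : ∀ i, h * δ i ≤ 1 ∧ h * ((∑ j, B i j) + ∑ j, ∑ k, H i j k) ≤ 1)
    {y : Fin n → ℝ} (hy : InCube y) : InCube (SIS h δ B H y) := by
  intro i
  obtain ⟨hpB0, hpB1⟩ := sum_mul_mem_Icc_sum (B i) y (hB i) hy
  obtain ⟨hpH0, hpH1⟩ := sum_sum_mul_mul_mem_Icc_sum_sum (H i) y (hH i) hy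
  have hhp : h * ((∑ j, B i j * y j) + ∑ j, ∑ k, H i j k * y j * y k) ≤ 1 :=
    le_trans (mul_le_mul_of_nonneg_left (add_le_add hpB1 hpH1) hh) (hA3a i).2
  exact add_mul_neg_mul_add_mul_mem_Icc hh (hδ i) (hA3a i).1 (add_nonneg hpB0 hpH0) hhp (hy i)

theorem stmt0_general {n : ℕ} (h : ℝ) (hh : 0 < h)
    (δ : Fin n → ℝ) (B : Matrix (Fin n) (Fin n) ℝ) (H : Fin n → Fin n → Fin n → ℝ)
    (hδ : ∀ i, 0 < δ i) (hB : ∀ i j, 0 ≤ B i j) (hH : ∀ i j k, 0 ≤ H i j k)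
    (hA3a : ∀ i, h * δ i ≤ 1 ∧ h * ((∑ j, B i j) + ∑ j, ∑ k, H i j k) ≤ 1)
    (x : ℕ → Fin n → ℝ) (hx : IsTraj (SIS h δ B H) x) (h0 : InCube (x 0)) :
    ∀ t, InCube (x t) := by
  intro t
  induction t with
  | zero => exact h0
  | succ t ih =>
    rw [hx t]
    exact inCube_SIS hh.le (fun i => (hδ i).le) hB hH hA3a ih

/-- Under Assumptions A2 and A3a, the cube `[0,1]^n` is positively
invariant under the discrete-time higher-order SIS map `F`. -/
theorem stmt0 {n : ℕ} (hn : 2 ≤ n) (h : ℝ) (hh : 0 < h)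
    (δ : Fin n → ℝ) (B : Matrix (Fin n) (Fin n) ℝ) (H : Fin n → Fin n → Fin n → ℝ)
    (hδ : ∀ i, 0 < δ i) (hB : ∀ i j, 0 ≤ B i j) (hH : ∀ i j k, 0 ≤ H i j k)
    (hA2 : MatIrred B)
    (hA3a : ∀ i, h * δ i ≤ 1 ∧ h * ((∑ j, B i j) + ∑ j, ∑ k, H i j k) ≤ 1)
    (x : ℕ → Fin n → ℝ) (hx : IsTraj (SIS h δ B H) x) (h0 : InCube (x 0)) :
    ∀ t, InCube (x t) :=
  stmt0_general h hh δ B H hδ hB hH hA3a x hx h0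
end

section
/- Under Assumptions A5 and A6a, if (x̄₁, x̄₂) ∈ S is an equilibrium of the bi-virus SIS map G, then for each ℓ ∈ {1,2} either x̄_ℓ = 0 or 0 < x̄_{ℓi} < 1 for all i; moreover x̄_{1i} + x̄_{2i} < 1 for all i. -/
open Finset Filter

/-- The bi-virus discrete-time higher-order SIS map `G`: virus `ℓ ∈ {0,1}` evolves by
`y_{ℓi} = x_{ℓi} + h(−δ_{ℓi} x_{ℓi} + (1 − x_{0i} − x_{1i})(Σ_j β_{ℓ,ij} x_{ℓj}
+ Σ_{j,k} β_{ℓ,ijk} x_{ℓj} x_{ℓk}))`. -/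
noncomputable def biSIS {n : ℕ} (h : ℝ) (δ : Fin 2 → Fin n → ℝ)
    (B : Fin 2 → Matrix (Fin n) (Fin n) ℝ) (H : Fin 2 → Fin n → Fin n → Fin n → ℝ)
    (x : Fin 2 → Fin n → ℝ) : Fin 2 → Fin n → ℝ := fun ℓ i =>
  x ℓ i + h * (-(δ ℓ i * x ℓ i) + (1 - x 0 i - x 1 i) *
    ((∑ j, B ℓ i j * x ℓ j) + ∑ j, ∑ k, H ℓ i j k * x ℓ j * x ℓ k))

/-- `x` is a trajectory of the discrete-time system `x(t+1) = G(x(t))`. -/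
def IsTraj2 {n : ℕ} (G : (Fin 2 → Fin n → ℝ) → Fin 2 → Fin n → ℝ)
    (x : ℕ → Fin 2 → Fin n → ℝ) : Prop := ∀ t, x (t + 1) = G (x t)

/-- The simplex-like invariant set
`S = {(x₁,x₂) : x_{ℓi} ≥ 0, x_{1i} + x_{2i} ≤ 1}`. -/
def InS {n : ℕ} (x : Fin 2 → Fin n → ℝ) : Prop :=
  (∀ ℓ i, 0 ≤ x ℓ i) ∧ ∀ i, x 0 i + x 1 i ≤ 1

/-- Local asymptotic stability (max-norm) of an equilibrium `p` of the bi-virus map,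
for trajectories starting in `S`. -/
def LocAsympStable2 {n : ℕ} (G : (Fin 2 → Fin n → ℝ) → Fin 2 → Fin n → ℝ)
    (p : Fin 2 → Fin n → ℝ) : Prop :=
  ∀ ε > 0, ∃ d > 0, ∀ x : ℕ → Fin 2 → Fin n → ℝ, IsTraj2 G x → InS (x 0) →
    ‖x 0 - p‖ < d → (∀ t, ‖x t - p‖ < ε) ∧ Tendsto x atTop (nhds p)

/-- Instability (max-norm) of an equilibrium `p` of the bi-virus map, for trajectories
starting in `S`. -/
def Unstable2 {n : ℕ} (G : (Fin 2 → Fin n → ℝ) → Fin 2 → Fin n → ℝ)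
    (p : Fin 2 → Fin n → ℝ) : Prop :=
  ∃ ε > 0, ∀ d > 0, ∃ x : ℕ → Fin 2 → Fin n → ℝ, IsTraj2 G x ∧ InS (x 0) ∧
    ‖x 0 - p‖ < d ∧ ∃ t, ε ≤ ‖x t - p‖

open scoped Matrix

/-!
At an equilibrium the update term vanishes, so `δ_{ℓi} x̄_{ℓi} = (1 - x̄_{1i} - x̄_{2i}) F_{ℓi}(x̄)`
with `F_{ℓi}` the (nonnegative) infection pressure. If `x̄_{1i} + x̄_{2i} = 1`, both `x̄_{ℓi}`
vanish since `δ_{ℓi} > 0`, contradicting the sum being `1`. Hence `1 - x̄_{1i} - x̄_{2i} > 0`,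
so `x̄_{ℓi} = 0` forces `(B_ℓ x̄_ℓ)_i = 0`; by irreducibility the zero set of `x̄_ℓ` is then
empty or everything.
-/

theorem MatIrred.eq_zero_or_forall_pos {n : ℕ} {M : Matrix (Fin n) (Fin n) ℝ}
    (hM : MatIrred M) (hM₀ : ∀ i j, 0 ≤ M i j) {v : Fin n → ℝ} (hv : ∀ i, 0 ≤ v i)
    (hzero : ∀ i, v i = 0 → (M *ᵥ v) i ≤ 0) : v = 0 ∨ ∀ i, 0 < v i := by
  by_contra! ⟨hne, i₀, hi₀⟩
  have hZ : {i | v i = 0}.Nonempty := ⟨i₀, le_antisymm hi₀ (hv i₀)⟩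
  have hZ' : {i | v i = 0} ≠ Set.univ := fun hu =>
    hne (funext fun i => (hu ▸ Set.mem_univ i : i ∈ {i | v i = 0}))
  obtain ⟨a, ha, b, hb, hMab⟩ := hM _ hZ hZ'
  have hpos : 0 < (M *ᵥ v) a :=
    Finset.sum_pos' (fun j _ => mul_nonneg (hM₀ a j) (hv j))
      ⟨b, mem_univ b, mul_pos ((hM₀ a b).lt_of_ne' hMab) ((hv b).lt_of_ne' hb)⟩
  exact (hzero a ha).not_gt hpos

section Equilibrium

variable {n : ℕ} {h : ℝ} {δ : Fin 2 → Fin n → ℝ} {B : Fin 2 → Matrix (Fin n) (Fin n) ℝ}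
  {H : Fin 2 → Fin n → Fin n → Fin n → ℝ} {x : Fin 2 → Fin n → ℝ}

theorem biSIS_eq_self_balance (hh : h ≠ 0) (heq : biSIS h δ B H x = x) (ℓ : Fin 2)
    (i : Fin n) : δ ℓ i * x ℓ i = (1 - x 0 i - x 1 i) *
      ((B ℓ *ᵥ x ℓ) i + ∑ j, ∑ k, H ℓ i j k * x ℓ j * x ℓ k) := by
  have hfix := congrFun (congrFun heq ℓ) i
  simp only [biSIS] at hfix
  have hupdate := (mul_eq_zero.mp (add_eq_left.mp hfix)).resolve_left hh
  simp only [Matrix.mulVec, dotProduct]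
  linarith

theorem InS.add_lt_one_of_biSIS_eq_self (hh : h ≠ 0) (hδ : ∀ ℓ i, 0 < δ ℓ i) (hS : InS x)
    (heq : biSIS h δ B H x = x) (i : Fin n) : x 0 i + x 1 i < 1 := by
  refine (hS.2 i).lt_of_ne fun hsum => ?_
  have hzero (ℓ : Fin 2) : x ℓ i = 0 := by
    have hbal := biSIS_eq_self_balance hh heq ℓ i
    rw [show 1 - x 0 i - x 1 i = 0 by linarith, zero_mul] at hbal
    exact (mul_eq_zero.mp hbal).resolve_left (hδ ℓ i).ne'
  linarith [hzero 0, hzero 1]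

theorem InS.mulVec_le_zero_of_biSIS_eq_self (hh : h ≠ 0) (hδ : ∀ ℓ i, 0 < δ ℓ i)
    (hH : ∀ ℓ i j k, 0 ≤ H ℓ i j k) (hS : InS x) (heq : biSIS h δ B H x = x) (ℓ : Fin 2)
    (i : Fin n) (hi : x ℓ i = 0) : (B ℓ *ᵥ x ℓ) i ≤ 0 := by
  have hbal := biSIS_eq_self_balance hh heq ℓ i
  rw [hi, mul_zero, eq_comm, mul_eq_zero] at hbal
  have hsusceptible : 1 - x 0 i - x 1 i ≠ 0 := by
    linarith [hS.add_lt_one_of_biSIS_eq_self hh hδ heq i]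
  have hcubic : 0 ≤ ∑ j, ∑ k, H ℓ i j k * x ℓ j * x ℓ k :=
    sum_nonneg fun j _ => sum_nonneg fun k _ =>
      mul_nonneg (mul_nonneg (hH ℓ i j k) (hS.1 ℓ j)) (hS.1 ℓ k)
  linarith [hbal.resolve_left hsusceptible]

theorem InS.lt_one_of_add_lt_one (hS : InS x) {i : Fin n} (hsum : x 0 i + x 1 i < 1) :
    ∀ ℓ, x ℓ i < 1 := Fin.forall_fin_two.mpr ⟨by linarith [hS.1 1 i], by linarith [hS.1 0 i]⟩

end Equilibrium

theorem stmt9_general {n : ℕ} (h : ℝ) (hh : 0 < h)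
    (δ : Fin 2 → Fin n → ℝ) (B : Fin 2 → Matrix (Fin n) (Fin n) ℝ)
    (H : Fin 2 → Fin n → Fin n → Fin n → ℝ)
    (hδ : ∀ ℓ i, 0 < δ ℓ i) (hB : ∀ ℓ i j, 0 ≤ B ℓ i j) (hH : ∀ ℓ i j k, 0 ≤ H ℓ i j k)
    (hA5 : ∀ ℓ, MatIrred (B ℓ))
    (xb : Fin 2 → Fin n → ℝ) (hS : InS xb) (heq : biSIS h δ B H xb = xb) :
    (∀ ℓ, xb ℓ = 0 ∨ ∀ i, 0 < xb ℓ i ∧ xb ℓ i < 1) ∧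
    ∀ i, xb 0 i + xb 1 i < 1 := by
  have hsum := hS.add_lt_one_of_biSIS_eq_self hh.ne' hδ heq
  refine ⟨fun ℓ => ?_, hsum⟩
  refine ((hA5 ℓ).eq_zero_or_forall_pos (hB ℓ) (hS.1 ℓ)
    (hS.mulVec_le_zero_of_biSIS_eq_self hh.ne' hδ hH heq ℓ)).imp_right fun hpos i => ?_
  exact ⟨hpos i, hS.lt_one_of_add_lt_one (hsum i) ℓ⟩

/-- under Assumptions A5 and A6a, for any equilibrium `(x̄₁,x̄₂) ∈ S` of
the bi-virus SIS map, for each `ℓ` either `x̄_ℓ = 0` or `0 < x̄_{ℓi} < 1` for all `i`;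
moreover `x̄_{1i} + x̄_{2i} < 1` for all `i`. -/
theorem stmt9 {n : ℕ} (hn : 2 ≤ n) (h : ℝ) (hh : 0 < h)
    (δ : Fin 2 → Fin n → ℝ) (B : Fin 2 → Matrix (Fin n) (Fin n) ℝ)
    (H : Fin 2 → Fin n → Fin n → Fin n → ℝ)
    (hδ : ∀ ℓ i, 0 < δ ℓ i) (hB : ∀ ℓ i j, 0 ≤ B ℓ i j) (hH : ∀ ℓ i j k, 0 ≤ H ℓ i j k)
    (hA5 : ∀ ℓ, MatIrred (B ℓ))
    (hA6a : ∀ ℓ i, h * δ ℓ i ≤ 1 ∧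
      h * (∑ l, ((∑ j, B l i j) + ∑ j, ∑ k, H l i j k)) ≤ 1)
    (xb : Fin 2 → Fin n → ℝ) (hS : InS xb) (heq : biSIS h δ B H xb = xb) :
    (∀ ℓ, xb ℓ = 0 ∨ ∀ i, 0 < xb ℓ i ∧ xb ℓ i < 1) ∧
    ∀ i, xb 0 i + xb 1 i < 1 :=
  stmt9_general h hh δ B H hδ hB hH hA5 xb hS heq
end

section
/- Under Assumptions A5 and A6a, suppose both arrays H₁ and H₂ are irreducible. (a) If Σ_j β_{ℓ,ij} < δ_{ℓi} < Σ_j β_{ℓ,ij} + Σ_{j,k} β_{ℓ,ijk} for all i and both ℓ, then the healthy state (0,0) is locally asymptotically stable and every trajectory starting in S with max_i |x_{ℓi}(0)| < min_i (δ_{ℓi} − Σ_j β_{ℓ,ij})/(Σ_{j,k} β_{ℓ,ijk}) for each ℓ = 1,2 converges to (0,0). (b) If δ_{ℓi} > Σ_j β_{ℓ,ij} + Σ_{j,k} β_{ℓ,ijk} for all i and both ℓ, then (0,0) is globally asymptotically stable on S: every trajectory starting in S converges to (0,0). -/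
open Finset Filter

/-
Write `F_{ℓi}(x) = Σ_j β_{ℓ,ij} x_{ℓj} + Σ_{j,k} β_{ℓ,ijk} x_{ℓj} x_{ℓk}` for the infection
pressure. Assumption A6a makes `S` forward invariant. On `S` the susceptible fraction is at
most `1`, so if `x_{ℓj} ≤ m` for all `j`, then
`G(x)_{ℓi} ≤ m (1 - h (δ_{ℓi} - Σ_j β_{ℓ,ij} - m Σ_{j,k} β_{ℓ,ijk}))`.
The bracket only grows as `m` decreases, so once it is positive at `m = ‖x(0)‖` the sup norm
of each virus decays geometrically. In (a) this holds below the threshold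
`(δ_{ℓi} - Σ_j β_{ℓ,ij}) / Σ_{j,k} β_{ℓ,ijk}`, in (b) it holds on all of `S`, where `‖x_ℓ‖ ≤ 1`.
-/

open Topology

lemma Finite.exists_pos_forall_le {ι : Type*} [Finite ι] (f : ι → ℝ) (hf : ∀ i, 0 < f i) :
    ∃ c, 0 < c ∧ ∀ i, c ≤ f i := by
  obtain ⟨c, hc⟩ := Finite.exists_ge fun i => (⟨f i, hf i⟩ : Set.Ioi (0 : ℝ))
  exact ⟨c, c.2, hc⟩

section InfectionPressure

variable {ι : Type*} [Fintype ι] (B : Matrix ι ι ℝ) (H : ι → ι → ι → ℝ)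

def infectionPressure (y : ι → ℝ) (i : ι) : ℝ :=
  ∑ j, B i j * y j + ∑ j, ∑ k, H i j k * y j * y k

variable {B H}

lemma infectionPressure_nonneg (hB : ∀ i j, 0 ≤ B i j) (hH : ∀ i j k, 0 ≤ H i j k)
    {y : ι → ℝ} (hy : ∀ j, 0 ≤ y j) (i : ι) : 0 ≤ infectionPressure B H y i :=
  add_nonneg (sum_nonneg fun j _ => mul_nonneg (hB i j) (hy j))
    (sum_nonneg fun j _ => sum_nonneg fun k _ =>
      mul_nonneg (mul_nonneg (hH i j k) (hy j)) (hy k))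

lemma infectionPressure_le (hB : ∀ i j, 0 ≤ B i j) (hH : ∀ i j k, 0 ≤ H i j k)
    {y : ι → ℝ} {m : ℝ} (hy : ∀ j, 0 ≤ y j) (hym : ∀ j, y j ≤ m) (i : ι) :
    infectionPressure B H y i ≤ (∑ j, B i j) * m + (∑ j, ∑ k, H i j k) * m * m := by
  unfold infectionPressure
  simp only [sum_mul]
  refine add_le_add (sum_le_sum fun j _ => ?_)
    (sum_le_sum fun j _ => sum_le_sum fun k _ => ?_)
  · exact mul_le_mul_of_nonneg_left (hym j) (hB i j)
  · exact mul_le_mul (mul_le_mul_of_nonneg_left (hym j) (hH i j k)) (hym k) (hy k)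
      (mul_nonneg (hH i j k) ((hy j).trans (hym j)))

end InfectionPressure

section BiVirus

variable {n : ℕ} {h : ℝ} {δ : Fin 2 → Fin n → ℝ} {B : Fin 2 → Matrix (Fin n) (Fin n) ℝ}
  {H : Fin 2 → Fin n → Fin n → Fin n → ℝ}

lemma InS.le_one {x : Fin 2 → Fin n → ℝ} (hx : InS x) (ℓ : Fin 2) (j : Fin n) :
    x ℓ j ≤ 1 := by
  fin_cases ℓ <;> simp <;> linarith [hx.1 0 j, hx.1 1 j, hx.2 j]

lemma InS.norm_le_iff {x : Fin 2 → Fin n → ℝ} (hx : InS x) (ℓ : Fin 2) {m : ℝ}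
    (hm : 0 ≤ m) : ‖x ℓ‖ ≤ m ↔ ∀ j, x ℓ j ≤ m := by
  simp only [pi_norm_le_iff_of_nonneg hm, Real.norm_of_nonneg (hx.1 ℓ _)]

lemma InS.norm_le_one {x : Fin 2 → Fin n → ℝ} (hx : InS x) (ℓ : Fin 2) : ‖x ℓ‖ ≤ 1 :=
  (hx.norm_le_iff ℓ zero_le_one).2 (hx.le_one ℓ)

lemma biSIS_apply (x : Fin 2 → Fin n → ℝ) (ℓ : Fin 2) (i : Fin n) :
    biSIS h δ B H x ℓ i = x ℓ i * (1 - h * δ ℓ i) +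
      h * ((1 - x 0 i - x 1 i) * infectionPressure (B ℓ) (H ℓ) (x ℓ) i) := by
  unfold biSIS infectionPressure
  ring

lemma InS.biSIS (hh : 0 ≤ h) (hδ : ∀ ℓ i, 0 < δ ℓ i) (hB : ∀ ℓ i j, 0 ≤ B ℓ i j)
    (hH : ∀ ℓ i j k, 0 ≤ H ℓ i j k)
    (hA6a : ∀ ℓ i, h * δ ℓ i ≤ 1 ∧
      h * (∑ l, ((∑ j, B l i j) + ∑ j, ∑ k, H l i j k)) ≤ 1)
    {x : Fin 2 → Fin n → ℝ} (hx : InS x) : InS (biSIS h δ B H x) := by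
  have hsus : ∀ i, 0 ≤ 1 - x 0 i - x 1 i := fun i => by linarith [hx.2 i]
  have hF := fun ℓ => infectionPressure_nonneg (hB ℓ) (hH ℓ) (hx.1 ℓ)
  constructor
  · intro ℓ i
    rw [biSIS_apply]
    exact add_nonneg (mul_nonneg (hx.1 ℓ i) (by linarith [(hA6a ℓ i).1]))
      (mul_nonneg hh (mul_nonneg (hsus i) (hF ℓ i)))
  · intro i
    have hFle := fun ℓ => infectionPressure_le (hB ℓ) (hH ℓ) (hx.1 ℓ) (hx.le_one ℓ) i
    have htotal := (hA6a 0 i).2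
    rw [Fin.sum_univ_two] at htotal
    have hδx := fun ℓ => mul_nonneg hh (mul_nonneg (hδ ℓ i).le (hx.1 ℓ i))
    -- by A6a the new infections fill at most the susceptible fraction `1 - x₀ᵢ - x₁ᵢ`
    have hnew : h * (infectionPressure (B 0) (H 0) (x 0) i +
        infectionPressure (B 1) (H 1) (x 1) i) ≤ 1 := by
      nlinarith [hFle 0, hFle 1]
    rw [biSIS_apply, biSIS_apply]
    nlinarith [hδx 0, hδx 1, mul_le_mul_of_nonneg_left hnew (hsus i)]

lemma IsTraj2.inS (hh : 0 ≤ h) (hδ : ∀ ℓ i, 0 < δ ℓ i) (hB : ∀ ℓ i j, 0 ≤ B ℓ i j)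
    (hH : ∀ ℓ i j k, 0 ≤ H ℓ i j k)
    (hA6a : ∀ ℓ i, h * δ ℓ i ≤ 1 ∧
      h * (∑ l, ((∑ j, B l i j) + ∑ j, ∑ k, H l i j k)) ≤ 1)
    {x : ℕ → Fin 2 → Fin n → ℝ} (hx : IsTraj2 (biSIS h δ B H) x) (h0 : InS (x 0)) :
    ∀ t, InS (x t)
  | 0 => h0
  | t + 1 => hx t ▸ (hx.inS hh hδ hB hH hA6a h0 t).biSIS hh hδ hB hH hA6a

lemma biSIS_le (hh : 0 ≤ h) (hB : ∀ ℓ i j, 0 ≤ B ℓ i j) (hH : ∀ ℓ i j k, 0 ≤ H ℓ i j k)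
    {x : Fin 2 → Fin n → ℝ} (hx : InS x) {ℓ : Fin 2} {i : Fin n} (hδ : h * δ ℓ i ≤ 1)
    {m : ℝ} (hm : ∀ j, x ℓ j ≤ m) :
    biSIS h δ B H x ℓ i ≤
      m * (1 - h * (δ ℓ i - ∑ j, B ℓ i j - (∑ j, ∑ k, H ℓ i j k) * m)) := by
  have hF := infectionPressure_nonneg (hB ℓ) (hH ℓ) (hx.1 ℓ) i
  have hFle := infectionPressure_le (hB ℓ) (hH ℓ) (hx.1 ℓ) hm i
  have hsus : 1 - x 0 i - x 1 i ≤ 1 := by linarith [hx.1 0 i, hx.1 1 i]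
  rw [biSIS_apply]
  calc x ℓ i * (1 - h * δ ℓ i) +
        h * ((1 - x 0 i - x 1 i) * infectionPressure (B ℓ) (H ℓ) (x ℓ) i)
      ≤ m * (1 - h * δ ℓ i) + h * (1 * infectionPressure (B ℓ) (H ℓ) (x ℓ) i) := by
        gcongr
        exact hm i
    _ ≤ m * (1 - h * δ ℓ i) +
        h * ((∑ j, B ℓ i j) * m + (∑ j, ∑ k, H ℓ i j k) * m * m) := by
        rw [one_mul]; gcongr
    _ = _ := by ring

lemma IsTraj2.norm_le_geometric (hh : 0 ≤ h) (hB : ∀ ℓ i j, 0 ≤ B ℓ i j)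
    (hH : ∀ ℓ i j k, 0 ≤ H ℓ i j k) {x : ℕ → Fin 2 → Fin n → ℝ}
    (hx : IsTraj2 (biSIS h δ B H) x) (hS : ∀ t, InS (x t)) {ℓ : Fin 2}
    (hδ : ∀ i, h * δ ℓ i ≤ 1) {r : ℝ} (hr0 : 0 ≤ r) (hr1 : r ≤ 1)
    (hr : ∀ i, 1 - h * (δ ℓ i - ∑ j, B ℓ i j - (∑ j, ∑ k, H ℓ i j k) * ‖x 0 ℓ‖) ≤ r) :
    ∀ t, ‖x t ℓ‖ ≤ r ^ t * ‖x 0 ℓ‖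
  | 0 => by simp
  | t + 1 => by
    have hm0 : 0 ≤ r ^ t * ‖x 0 ℓ‖ := by positivity
    have hmle : r ^ t * ‖x 0 ℓ‖ ≤ ‖x 0 ℓ‖ :=
      mul_le_of_le_one_left (norm_nonneg _) (pow_le_one₀ hr0 hr1)
    have ih := (hS t).norm_le_iff ℓ hm0 |>.1
      (hx.norm_le_geometric hh hB hH hS hδ hr0 hr1 hr t)
    rw [(hS (t + 1)).norm_le_iff ℓ (by positivity)]
    intro i
    have hHi : 0 ≤ ∑ j, ∑ k, H ℓ i j k :=
      sum_nonneg fun j _ => sum_nonneg fun k _ => hH ℓ i j k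
    calc x (t + 1) ℓ i
        ≤ r ^ t * ‖x 0 ℓ‖ * (1 - h * (δ ℓ i - ∑ j, B ℓ i j -
            (∑ j, ∑ k, H ℓ i j k) * (r ^ t * ‖x 0 ℓ‖))) :=
          hx t ▸ biSIS_le hh hB hH (hS t) (hδ i) ih
      _ ≤ r ^ t * ‖x 0 ℓ‖ * r := by
        gcongr
        refine le_trans ?_ (hr i)
        gcongr
      _ = r ^ (t + 1) * ‖x 0 ℓ‖ := by ring

lemma IsTraj2.norm_le_and_tendsto_zero (hh : 0 < h) (hδ : ∀ ℓ i, 0 < δ ℓ i)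
    (hB : ∀ ℓ i j, 0 ≤ B ℓ i j) (hH : ∀ ℓ i j k, 0 ≤ H ℓ i j k)
    (hA6a : ∀ ℓ i, h * δ ℓ i ≤ 1 ∧
      h * (∑ l, ((∑ j, B l i j) + ∑ j, ∑ k, H l i j k)) ≤ 1)
    {x : ℕ → Fin 2 → Fin n → ℝ} (hx : IsTraj2 (biSIS h δ B H) x) (h0 : InS (x 0))
    (hgap : ∀ ℓ i, (∑ j, ∑ k, H ℓ i j k) * ‖x 0 ℓ‖ < δ ℓ i - ∑ j, B ℓ i j) :
    (∀ t, ‖x t‖ ≤ ‖x 0‖) ∧ Tendsto x atTop (𝓝 0) := by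
  obtain ⟨q, hq0, hq⟩ := Finite.exists_pos_forall_le
    (fun p : Fin 2 × Fin n => h * (δ p.1 p.2 - ∑ j, B p.1 p.2 j -
      (∑ j, ∑ k, H p.1 p.2 j k) * ‖x 0 p.1‖))
    fun p => mul_pos hh (by linarith [hgap p.1 p.2])
  set r := 1 - min q 1
  have hr0 : 0 ≤ r := by simp [r]
  have hr1 : r < 1 := by simp [r, hq0]
  have hdecay : ∀ t, ‖x t‖ ≤ r ^ t * ‖x 0‖ := fun t =>
    pi_norm_le_iff_of_nonneg (by positivity) |>.2 fun ℓ =>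
      (hx.norm_le_geometric hh.le hB hH (hx.inS hh.le hδ hB hH hA6a h0)
        (fun i => (hA6a ℓ i).1) hr0 hr1.le
        (fun i => by linarith [hq (ℓ, i), min_le_left q 1]) t).trans
        (by gcongr; exact norm_le_pi_norm _ ℓ)
  refine ⟨fun t => (hdecay t).trans (mul_le_of_le_one_left (norm_nonneg _)
    (pow_le_one₀ hr0 hr1.le)), ?_⟩
  refine squeeze_zero_norm hdecay ?_
  simpa using (tendsto_pow_atTop_nhds_zero_of_lt_one hr0 hr1).mul_const ‖x 0‖

end BiVirus

lemma locAsympStable2_zero_of_forall_norm_lt {n : ℕ}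
    {G : (Fin 2 → Fin n → ℝ) → Fin 2 → Fin n → ℝ} {c : ℝ} (hc : 0 < c)
    (hG : ∀ x, IsTraj2 G x → InS (x 0) → ‖x 0‖ < c →
      (∀ t, ‖x t‖ ≤ ‖x 0‖) ∧ Tendsto x atTop (𝓝 0)) :
    LocAsympStable2 G 0 := by
  intro ε hε
  refine ⟨min ε c, lt_min hε hc, fun x hx h0 hd => ?_⟩
  simp only [sub_zero] at hd ⊢
  obtain ⟨hbound, hlim⟩ := hG x hx h0 (hd.trans_le (min_le_right _ _))
  exact ⟨fun t => (hbound t).trans_lt (hd.trans_le (min_le_left _ _)), hlim⟩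

theorem stmt11_general {n : ℕ} (h : ℝ) (hh : 0 < h)
    (δ : Fin 2 → Fin n → ℝ) (B : Fin 2 → Matrix (Fin n) (Fin n) ℝ)
    (H : Fin 2 → Fin n → Fin n → Fin n → ℝ)
    (hδ : ∀ ℓ i, 0 < δ ℓ i) (hB : ∀ ℓ i j, 0 ≤ B ℓ i j) (hH : ∀ ℓ i j k, 0 ≤ H ℓ i j k)
    (hA6a : ∀ ℓ i, h * δ ℓ i ≤ 1 ∧
      h * (∑ l, ((∑ j, B l i j) + ∑ j, ∑ k, H l i j k)) ≤ 1) :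
    ((∀ ℓ i, (∑ j, B ℓ i j) < δ ℓ i ∧ δ ℓ i < (∑ j, B ℓ i j) + ∑ j, ∑ k, H ℓ i j k) →
      LocAsympStable2 (biSIS h δ B H) 0 ∧
      ∀ x : ℕ → Fin 2 → Fin n → ℝ, IsTraj2 (biSIS h δ B H) x → InS (x 0) →
        (∀ ℓ, ‖x 0 ℓ‖ < ⨅ i, (δ ℓ i - ∑ j, B ℓ i j) / (∑ j, ∑ k, H ℓ i j k)) →
        Tendsto x atTop (nhds 0)) ∧
    ((∀ ℓ i, (∑ j, B ℓ i j) + (∑ j, ∑ k, H ℓ i j k) < δ ℓ i) →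
      LocAsympStable2 (biSIS h δ B H) 0 ∧
      ∀ x : ℕ → Fin 2 → Fin n → ℝ, IsTraj2 (biSIS h δ B H) x → InS (x 0) →
        Tendsto x atTop (nhds 0)) := by
  have attracts := fun x hx h0 => IsTraj2.norm_le_and_tendsto_zero hh hδ hB hH hA6a (x := x) hx h0
  constructor
  · intro ha
    have hH_pos : ∀ ℓ i, 0 < ∑ j, ∑ k, H ℓ i j k := fun ℓ i => by linarith [ha ℓ i]
    have hgap : ∀ (x₀ : Fin 2 → Fin n → ℝ) ℓ i,
        ‖x₀ ℓ‖ < (δ ℓ i - ∑ j, B ℓ i j) / (∑ j, ∑ k, H ℓ i j k) →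
        (∑ j, ∑ k, H ℓ i j k) * ‖x₀ ℓ‖ < δ ℓ i - ∑ j, B ℓ i j :=
      fun x₀ ℓ i hx₀ => (lt_div_iff₀' (hH_pos ℓ i)).1 hx₀
    obtain ⟨c, hc, hc_le⟩ := Finite.exists_pos_forall_le
      (fun p : Fin 2 × Fin n => (δ p.1 p.2 - ∑ j, B p.1 p.2 j) / (∑ j, ∑ k, H p.1 p.2 j k))
      fun p => div_pos (by linarith [ha p.1 p.2]) (hH_pos p.1 p.2)
    refine ⟨locAsympStable2_zero_of_forall_norm_lt hc fun x hx h0 hxc =>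
      attracts x hx h0 fun ℓ i => hgap _ ℓ i ?_, fun x hx h0 hxc =>
      (attracts x hx h0 fun ℓ i => hgap _ ℓ i ?_).2⟩
    · exact ((norm_le_pi_norm _ ℓ).trans_lt hxc).trans_le (hc_le (ℓ, i))
    · exact (hxc ℓ).trans_le (ciInf_le (Finite.bddBelow_range _) i)
  · intro hb
    have hgap : ∀ x₀ : Fin 2 → Fin n → ℝ, InS x₀ →
        ∀ ℓ i, (∑ j, ∑ k, H ℓ i j k) * ‖x₀ ℓ‖ < δ ℓ i - ∑ j, B ℓ i j := fun x₀ hx₀ ℓ i => by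
      have hH_nonneg : 0 ≤ ∑ j, ∑ k, H ℓ i j k :=
        sum_nonneg fun j _ => sum_nonneg fun k _ => hH ℓ i j k
      nlinarith [hb ℓ i, mul_le_mul_of_nonneg_left (hx₀.norm_le_one ℓ) hH_nonneg]
    exact ⟨locAsympStable2_zero_of_forall_norm_lt one_pos fun x hx h0 _ =>
      attracts x hx h0 (hgap _ h0), fun x hx h0 => (attracts x hx h0 (hgap _ h0)).2⟩

/-- with `H₁, H₂` irreducible, (a) if
`Σ_j β_{ℓ,ij} < δ_{ℓi} < Σ_j β_{ℓ,ij} + Σ_{j,k} β_{ℓ,ijk}` for all `i, ℓ`, the healthy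
state `(0,0)` is locally asymptotically stable, with domain of attraction
`max_i |x_{ℓi}(0)| < min_i (δ_{ℓi} − Σ_j β_{ℓ,ij})/(Σ_{j,k} β_{ℓ,ijk})` for each `ℓ`;
(b) if `δ_{ℓi} > Σ_j β_{ℓ,ij} + Σ_{j,k} β_{ℓ,ijk}` for all `i, ℓ`, then `(0,0)` is
globally asymptotically stable on `S`. -/
theorem stmt11 {n : ℕ} (hn : 2 ≤ n) (h : ℝ) (hh : 0 < h)
    (δ : Fin 2 → Fin n → ℝ) (B : Fin 2 → Matrix (Fin n) (Fin n) ℝ)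
    (H : Fin 2 → Fin n → Fin n → Fin n → ℝ)
    (hδ : ∀ ℓ i, 0 < δ ℓ i) (hB : ∀ ℓ i j, 0 ≤ B ℓ i j) (hH : ∀ ℓ i j k, 0 ≤ H ℓ i j k)
    (hA5 : ∀ ℓ, MatIrred (B ℓ))
    (hA6a : ∀ ℓ i, h * δ ℓ i ≤ 1 ∧
      h * (∑ l, ((∑ j, B l i j) + ∑ j, ∑ k, H l i j k)) ≤ 1)
    (hHirr : ∀ ℓ, TensIrred (H ℓ)) :
    ((∀ ℓ i, (∑ j, B ℓ i j) < δ ℓ i ∧ δ ℓ i < (∑ j, B ℓ i j) + ∑ j, ∑ k, H ℓ i j k) →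
      LocAsympStable2 (biSIS h δ B H) 0 ∧
      ∀ x : ℕ → Fin 2 → Fin n → ℝ, IsTraj2 (biSIS h δ B H) x → InS (x 0) →
        (∀ ℓ, ‖x 0 ℓ‖ < ⨅ i, (δ ℓ i - ∑ j, B ℓ i j) / (∑ j, ∑ k, H ℓ i j k)) →
        Tendsto x atTop (nhds 0)) ∧
    ((∀ ℓ i, (∑ j, B ℓ i j) + (∑ j, ∑ k, H ℓ i j k) < δ ℓ i) →
      LocAsympStable2 (biSIS h δ B H) 0 ∧
      ∀ x : ℕ → Fin 2 → Fin n → ℝ, IsTraj2 (biSIS h δ B H) x → InS (x 0) →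
        Tendsto x atTop (nhds 0)) :=
  stmt11_general h hh δ B H hδ hB hH hA6a
end

section
/- Under Assumptions A2 and A7a, suppose each array F_k (k = 3,…,n) is irreducible (there is no nonempty proper subset N₁ of {1,…,n} with β_{i i₁ … i_{k−1}} = 0 for all i ∈ N₁ and all i₁,…,i_{k−1} ∉ N₁) and δ_i > Σ_j β_{ij} for all i. For each i set c_{i,1} = Σ_j |(I − hD + hB)_{ij}| and c_{i,m} = h Σ_{i₁,…,i_m} β_{i i₁ … i_m} for m = 2,…,n−1. Then for each i the equation Σ_{m=1}^{n−1} c_{i,m} y^{m−1} = 1 has a unique positive real solution p_{i+}, the healthy state 0 is locally asymptotically stable, and every trajectory with x(0) ∈ [0,1]^n and max_i |x_i(0)| < min_i p_{i+} converges to 0. -/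
open Finset Filter

/-- Irreducibility of an order-`k` array `T_k` (entries `β_{i i₁ … i_{k−1}}`,
here `Tk i v` with `v : Fin (k−1) → Fin n` listing the trailing indices): there is no
nonempty proper subset `S` with `Tk i v = 0` for all `i ∈ S` and all trailing indices
outside `S`. -/
def TensIrredK {n : ℕ} (k : ℕ) (Tk : Fin n → (Fin (k - 1) → Fin n) → ℝ) : Prop :=
  ∀ S : Set (Fin n), S.Nonempty → S ≠ Set.univ →
    ∃ i ∈ S, ∃ v : Fin (k - 1) → Fin n, (∀ m, v m ∉ S) ∧ Tk i v ≠ 0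

/-- The general higher-order discrete-time SIS map:
`F(x)_i = x_i + h(−δ_i x_i + (1 − x_i)(Σ_j β_{ij} x_j +
Σ_{k=3}^n Σ_{i₁,…,i_{k−1}} β_{i i₁ … i_{k−1}} x_{i₁} ⋯ x_{i_{k−1}}))`,
where the order-`k` array is `T k` and `T k i v` is the entry with tail `i` and
trailing indices `v : Fin (k−1) → Fin n`. -/
noncomputable def hoSIS {n : ℕ} (h : ℝ) (δ : Fin n → ℝ) (B : Matrix (Fin n) (Fin n) ℝ)
    (T : (k : ℕ) → Fin n → (Fin (k - 1) → Fin n) → ℝ) (x : Fin n → ℝ) : Fin n → ℝ :=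
  fun i => x i + h * (-(δ i * x i) + (1 - x i) * ((∑ j, B i j * x j) +
    ∑ k ∈ Finset.Icc 3 n, ∑ v : Fin (k - 1) → Fin n, T k i v * ∏ m, x (v m)))

/-- The coefficients of STATEMENT 19: `c_{i,1} = Σ_j |(I − hD + hB)_{ij}|` and
`c_{i,m} = h Σ_{i₁,…,i_m} β_{i i₁ … i_m}` for `m ≥ 2` (the order-`(m+1)` array). -/
noncomputable def cc {n : ℕ} (h : ℝ) (δ : Fin n → ℝ) (B : Matrix (Fin n) (Fin n) ℝ)
    (T : (k : ℕ) → Fin n → (Fin (k - 1) → Fin n) → ℝ) (i : Fin n) (m : ℕ) : ℝ :=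
  if m = 1 then ∑ j, |((1 : Matrix (Fin n) (Fin n) ℝ) - h • Matrix.diagonal δ + h • B) i j|
  else h * ∑ v : Fin m → Fin n, T (m + 1) i v

/-!
The coefficient `c_{i,1} = 1 - hδ_i + h Σ_j β_{ij}` is below `1`, and `c_{i,2} > 0` by
irreducibility of the order-3 array, so `g_i(y) = Σ_m c_{i,m} y^{m-1}` increases strictly on
`[0, ∞)` from a value below `1` to `∞` and takes the value `1` exactly once, at `p_{i+}`.
The SIS map keeps the cube invariant and satisfies `F(x)_i ≤ ‖x‖ g_i(‖x‖)` there, so on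
the ball of radius `r < min_i p_{i+}` it shrinks the max-norm by the factor `max_i g_i(r) < 1`,
and trajectories starting in that ball decay geometrically to `0`.
-/

def coeffPoly (c : ℕ → ℝ) (N : ℕ) (y : ℝ) : ℝ :=
  ∑ m ∈ Icc 1 N, c m * y ^ (m - 1)

section coeffPoly

variable {c : ℕ → ℝ} {N : ℕ}

theorem continuous_coeffPoly : Continuous (coeffPoly c N) :=
  continuous_finsetSum _ fun _ _ => continuous_const.mul (continuous_pow _)

theorem coeffPoly_zero (hN : 1 ≤ N) : coeffPoly c N 0 = c 1 := by
  rw [coeffPoly, Finset.sum_eq_single_of_mem 1 (by simp [hN])]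
  · simp
  · intro m hm hm1
    rw [zero_pow (by simp at hm; omega), mul_zero]

theorem monotoneOn_coeffPoly (hc : ∀ m ∈ Icc 1 N, 0 ≤ c m) :
    MonotoneOn (coeffPoly c N) (Set.Ici 0) := fun _ ha _ _ hab =>
  Finset.sum_le_sum fun m hm => mul_le_mul_of_nonneg_left (pow_le_pow_left₀ ha hab _) (hc m hm)

theorem strictMonoOn_coeffPoly (hN : 2 ≤ N) (hc : ∀ m ∈ Icc 1 N, 0 ≤ c m) (hc2 : 0 < c 2) :
    StrictMonoOn (coeffPoly c N) (Set.Ici 0) := fun a ha b _ hab =>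
  Finset.sum_lt_sum
    (fun m hm => mul_le_mul_of_nonneg_left (pow_le_pow_left₀ ha hab.le _) (hc m hm))
    ⟨2, by simp [hN], by simpa using mul_lt_mul_of_pos_left hab hc2⟩

theorem existsUnique_coeffPoly_eq_one (hN : 2 ≤ N) (hc : ∀ m ∈ Icc 1 N, 0 ≤ c m)
    (hc1 : c 1 < 1) (hc2 : 0 < c 2) : ∃! y, 0 < y ∧ coeffPoly c N y = 1 := by
  have hlarge : 1 < coeffPoly c N (2 / c 2) := by
    have hterm : c 2 * (2 / c 2) ^ (2 - 1) ≤ coeffPoly c N (2 / c 2) :=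
      Finset.single_le_sum (f := fun m => c m * (2 / c 2) ^ (m - 1))
        (fun m hm => mul_nonneg (hc m hm) (by positivity)) (by simp [hN])
    have : c 2 * (2 / c 2) ^ (2 - 1) = 2 := by norm_num [mul_div_cancel₀ _ hc2.ne']
    linarith
  obtain ⟨y, hy, hy1⟩ := intermediate_value_Ioo (by positivity)
    continuous_coeffPoly.continuousOn ⟨(coeffPoly_zero (by omega)).trans_lt hc1, hlarge⟩
  exact ⟨y, ⟨hy.1, hy1⟩, fun z hz => (strictMonoOn_coeffPoly hN hc hc2).injOn
    (Set.mem_Ici.mpr hz.1.le) (Set.mem_Ici.mpr hy.1.le) (hz.2.trans hy1.symm)⟩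

end coeffPoly

theorem norm_iterate_le_pow_mul {E : Type*} [SeminormedAddGroup E] {S : Set E} {F : E → E}
    {x : ℕ → E} (hx : ∀ t, x (t + 1) = F (x t)) (hx0 : x 0 ∈ S) {κ : ℝ} (hκ0 : 0 ≤ κ)
    (hκ1 : κ ≤ 1) (hF : ∀ y ∈ S, ‖y‖ ≤ ‖x 0‖ → F y ∈ S ∧ ‖F y‖ ≤ κ * ‖y‖) :
    ∀ t, x t ∈ S ∧ ‖x t‖ ≤ κ ^ t * ‖x 0‖
  | 0 => ⟨hx0, by simp⟩
  | t + 1 => by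
    obtain ⟨hxS, hxt⟩ := norm_iterate_le_pow_mul hx hx0 hκ0 hκ1 hF t
    have hxr : ‖x t‖ ≤ ‖x 0‖ :=
      hxt.trans (mul_le_of_le_one_left (norm_nonneg _) (pow_le_one₀ hκ0 hκ1))
    obtain ⟨hFS, hFn⟩ := hF _ hxS hxr
    refine ⟨hx t ▸ hFS, ?_⟩
    calc ‖x (t + 1)‖ ≤ κ * ‖x t‖ := hx t ▸ hFn
      _ ≤ κ * (κ ^ t * ‖x 0‖) := by gcongr
      _ = κ ^ (t + 1) * ‖x 0‖ := by ring

section SIS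

variable {n : ℕ} {h : ℝ} {δ : Fin n → ℝ} {B : Matrix (Fin n) (Fin n) ℝ}
  {T : (k : ℕ) → Fin n → (Fin (k - 1) → Fin n) → ℝ}

theorem cc_one_eq (hh : 0 ≤ h) {i : Fin n} (hhδ : h * δ i ≤ 1) (hB : ∀ j, 0 ≤ B i j) :
    cc h δ B T i 1 = 1 - h * δ i + h * ∑ j, B i j := by
  have hentry : ∀ j, |((1 : Matrix (Fin n) (Fin n) ℝ) - h • Matrix.diagonal δ + h • B) i j|
      = (if j = i then 1 - h * δ i else 0) + h * B i j := by
    intro j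
    rcases eq_or_ne j i with rfl | hji
    · simp only [Matrix.add_apply, Matrix.sub_apply, Matrix.smul_apply, Matrix.one_apply_eq,
        Matrix.diagonal_apply_eq, smul_eq_mul, if_true]
      exact abs_of_nonneg (by nlinarith [hB j])
    · simp only [Matrix.add_apply, Matrix.sub_apply, Matrix.smul_apply,
        Matrix.one_apply_ne hji.symm, Matrix.diagonal_apply_ne' _ hji, smul_eq_mul, if_neg hji,
        mul_zero, sub_zero, zero_add]
      exact abs_of_nonneg (mul_nonneg hh (hB j))
  simp only [cc, if_true, hentry, Finset.sum_add_distrib, Finset.sum_ite_eq', Finset.mem_univ,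
    Finset.mul_sum]

theorem cc_nonneg (hh : 0 ≤ h) (hT : ∀ k ∈ Icc 3 n, ∀ i v, 0 ≤ T k i v) (i : Fin n)
    {m : ℕ} (hm : m ∈ Icc 1 (n - 1)) : 0 ≤ cc h δ B T i m := by
  rw [Finset.mem_Icc] at hm
  unfold cc
  split_ifs
  · positivity
  · exact mul_nonneg hh (Finset.sum_nonneg fun v _ => hT (m + 1) (by simp; omega) i v)

theorem cc_two_pos (hn : 2 ≤ n) (hh : 0 < h) (hT : ∀ i v, 0 ≤ T 3 i v)
    (hirr : TensIrredK 3 (T 3)) (i : Fin n) : 0 < cc h δ B T i 2 := by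
  have : Nontrivial (Fin n) := Fin.nontrivial_iff_two_le.mpr hn
  obtain ⟨_, rfl, v, -, hv⟩ := hirr {i} (Set.singleton_nonempty i) (Set.singleton_ne_univ i)
  rw [cc, if_neg (by norm_num)]
  exact mul_pos hh <|
    Finset.sum_pos' (fun w _ => hT _ w) ⟨v, Finset.mem_univ v, (hT _ v).lt_of_ne' hv⟩

theorem mul_coeffPoly_cc (hn : 2 ≤ n) (hh : 0 ≤ h) {i : Fin n} (hhδ : h * δ i ≤ 1)
    (hB : ∀ j, 0 ≤ B i j) (r : ℝ) :
    r * coeffPoly (cc h δ B T i) (n - 1) r = (1 - h * δ i + h * ∑ j, B i j) * r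
      + h * ∑ k ∈ Icc 3 n, (∑ v : Fin (k - 1) → Fin n, T k i v) * r ^ (k - 1) := by
  have hsplit : Icc 1 (n - 1) = insert 1 (Icc 2 (n - 1)) := by
    ext m; simp only [Finset.mem_Icc, Finset.mem_insert]; omega
  have hshift : ∑ k ∈ Icc 3 n, (∑ v : Fin (k - 1) → Fin n, T k i v) * r ^ (k - 1)
      = ∑ m ∈ Icc 2 (n - 1), (∑ v : Fin m → Fin n, T (m + 1) i v) * r ^ m := by
    have : Icc 3 n = (Icc 2 (n - 1)).map (addRightEmbedding 1) := by
      rw [map_add_right_Icc, Nat.sub_add_cancel (by omega)]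
    rw [this, Finset.sum_map]
    rfl
  have htail : ∀ m ∈ Icc 2 (n - 1), r * (cc h δ B T i m * r ^ (m - 1))
      = h * ((∑ v : Fin m → Fin n, T (m + 1) i v) * r ^ m) := by
    intro m hm
    rw [Finset.mem_Icc] at hm
    have hpow : r ^ m = r * r ^ (m - 1) := by rw [← pow_succ', Nat.sub_add_cancel (by omega)]
    rw [cc, if_neg (by omega), hpow]
    ring
  rw [coeffPoly, Finset.mul_sum, hsplit, Finset.sum_insert (by simp), Finset.sum_congr rfl htail,
    ← Finset.mul_sum, hshift, cc_one_eq hh hhδ hB]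
  ring

def infectionForce (B : Matrix (Fin n) (Fin n) ℝ)
    (T : (k : ℕ) → Fin n → (Fin (k - 1) → Fin n) → ℝ) (y : Fin n → ℝ) (i : Fin n) :
    ℝ :=
  ∑ j, B i j * y j + ∑ k ∈ Icc 3 n, ∑ v : Fin (k - 1) → Fin n, T k i v * ∏ m, y (v m)

theorem hoSIS_apply (y : Fin n → ℝ) (i : Fin n) :
    hoSIS h δ B T y i = (1 - h * δ i) * y i + h * (1 - y i) * infectionForce B T y i := by
  unfold hoSIS infectionForce
  ring

variable {y : Fin n → ℝ}

theorem infectionForce_nonneg (hB : ∀ i j, 0 ≤ B i j)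
    (hT : ∀ k ∈ Icc 3 n, ∀ i v, 0 ≤ T k i v) (hy : ∀ j, 0 ≤ y j) (i : Fin n) :
    0 ≤ infectionForce B T y i :=
  add_nonneg (Finset.sum_nonneg fun j _ => mul_nonneg (hB i j) (hy j))
    (Finset.sum_nonneg fun k hk => Finset.sum_nonneg fun v _ =>
      mul_nonneg (hT k hk i v) (Finset.prod_nonneg fun _ _ => hy _))

theorem infectionForce_le (hB : ∀ i j, 0 ≤ B i j)
    (hT : ∀ k ∈ Icc 3 n, ∀ i v, 0 ≤ T k i v) {r : ℝ} (hy : ∀ j, 0 ≤ y j ∧ y j ≤ r) (i : Fin n) :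
    infectionForce B T y i ≤ (∑ j, B i j) * r
      + ∑ k ∈ Icc 3 n, (∑ v : Fin (k - 1) → Fin n, T k i v) * r ^ (k - 1) := by
  refine add_le_add ?_ (Finset.sum_le_sum fun k hk => ?_)
  · rw [Finset.sum_mul]
    exact Finset.sum_le_sum fun j _ => mul_le_mul_of_nonneg_left (hy j).2 (hB i j)
  · rw [Finset.sum_mul]
    refine Finset.sum_le_sum fun v _ => mul_le_mul_of_nonneg_left ?_ (hT k hk i v)
    calc ∏ m, y (v m) ≤ ∏ _m : Fin (k - 1), r :=
          Finset.prod_le_prod (fun _ _ => (hy _).1) (fun _ _ => (hy _).2)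
      _ = r ^ (k - 1) := by simp

theorem hoSIS_mem_cube (hh : 0 ≤ h) (hδ : ∀ i, 0 ≤ δ i) (hB : ∀ i j, 0 ≤ B i j)
    (hT : ∀ k ∈ Icc 3 n, ∀ i v, 0 ≤ T k i v)
    (hA7a : ∀ i, h * δ i ≤ 1 ∧
      h * ((∑ j, B i j) + ∑ k ∈ Icc 3 n, ∑ v : Fin (k - 1) → Fin n, T k i v) ≤ 1)
    (hy : InCube y) : InCube (hoSIS h δ B T y) := by
  intro i
  have hforce0 := mul_nonneg hh (infectionForce_nonneg hB hT (fun j => (hy j).1) i)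
  have hforce1 : h * infectionForce B T y i ≤ 1 := by
    refine le_trans (mul_le_mul_of_nonneg_left (infectionForce_le hB hT hy i) hh) ?_
    simpa using (hA7a i).2
  have hδ0 := mul_nonneg hh (hδ i)
  obtain ⟨hy0, hy1⟩ := hy i
  rw [hoSIS_apply, Set.mem_Icc]
  constructor <;> nlinarith [(hA7a i).1]

theorem hoSIS_le_mul_coeffPoly (hn : 2 ≤ n) (hh : 0 ≤ h) (hhδ : ∀ i, h * δ i ≤ 1)
    (hB : ∀ i j, 0 ≤ B i j) (hT : ∀ k ∈ Icc 3 n, ∀ i v, 0 ≤ T k i v) (hy : InCube y)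
    (i : Fin n) : hoSIS h δ B T y i ≤ ‖y‖ * coeffPoly (cc h δ B T i) (n - 1) ‖y‖ := by
  have hy_le : ∀ j, y j ≤ ‖y‖ := fun j =>
    (le_abs_self _).trans (norm_le_pi_norm y j)
  have hforce := infectionForce_le hB hT (fun j => ⟨(hy j).1, hy_le j⟩) i
  have hforce0 := mul_nonneg hh (infectionForce_nonneg hB hT (fun j => (hy j).1) i)
  obtain ⟨hy0, hy1⟩ := hy i
  rw [mul_coeffPoly_cc hn hh (hhδ i) (hB i), hoSIS_apply]
  nlinarith [mul_le_mul_of_nonneg_left (hy_le i) (sub_nonneg.mpr (hhδ i)),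
    mul_le_mul_of_nonneg_left hforce hh]

theorem norm_hoSIS_le (hn : 2 ≤ n) (hh : 0 ≤ h) (hδ : ∀ i, 0 ≤ δ i)
    (hB : ∀ i j, 0 ≤ B i j) (hT : ∀ k ∈ Icc 3 n, ∀ i v, 0 ≤ T k i v)
    (hA7a : ∀ i, h * δ i ≤ 1 ∧
      h * ((∑ j, B i j) + ∑ k ∈ Icc 3 n, ∑ v : Fin (k - 1) → Fin n, T k i v) ≤ 1)
    (hy : InCube y) {r κ : ℝ} (hr : ‖y‖ ≤ r) (hκ0 : 0 ≤ κ)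
    (hκ : ∀ i, coeffPoly (cc h δ B T i) (n - 1) r ≤ κ) :
    ‖hoSIS h δ B T y‖ ≤ κ * ‖y‖ := by
  refine (pi_norm_le_iff_of_nonneg (by positivity)).mpr fun i => ?_
  rw [Real.norm_eq_abs, abs_of_nonneg (hoSIS_mem_cube hh hδ hB hT hA7a hy i).1]
  calc hoSIS h δ B T y i ≤ ‖y‖ * coeffPoly (cc h δ B T i) (n - 1) ‖y‖ :=
        hoSIS_le_mul_coeffPoly hn hh (fun i => (hA7a i).1) hB hT hy i
    _ ≤ ‖y‖ * coeffPoly (cc h δ B T i) (n - 1) r := by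
        gcongr
        exact monotoneOn_coeffPoly (fun m hm => cc_nonneg hh hT i hm) (norm_nonneg y)
          ((norm_nonneg y).trans hr) hr
    _ ≤ κ * ‖y‖ := by rw [mul_comm]; gcongr; exact hκ i

theorem hoSIS_tendsto_zero (hn : 3 ≤ n) (hh : 0 ≤ h)
    (hδ : ∀ i, 0 ≤ δ i) (hB : ∀ i j, 0 ≤ B i j)
    (hT : ∀ k ∈ Icc 3 n, ∀ i v, 0 ≤ T k i v) (hA7a : ∀ i, h * δ i ≤ 1 ∧
      h * ((∑ j, B i j) + ∑ k ∈ Icc 3 n, ∑ v : Fin (k - 1) → Fin n, T k i v) ≤ 1)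
    (hc2 : ∀ i, 0 < cc h δ B T i 2) {p : Fin n → ℝ}
    (hp : ∀ i, coeffPoly (cc h δ B T i) (n - 1) (p i) = 1) {x : ℕ → Fin n → ℝ}
    (hx : IsTraj (hoSIS h δ B T) x) (hx0 : InCube (x 0)) (hxp : ∀ i, ‖x 0‖ < p i) :
    (∀ t, ‖x t‖ ≤ ‖x 0‖) ∧ Tendsto x atTop (nhds 0) := by
  have : Nonempty (Fin n) := ⟨⟨0, by omega⟩⟩
  have hlt : ∀ i, coeffPoly (cc h δ B T i) (n - 1) ‖x 0‖ < 1 := fun i =>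
    hp i ▸ strictMonoOn_coeffPoly (by omega) (fun m hm => cc_nonneg hh hT i hm) (hc2 i)
      (norm_nonneg _) ((norm_nonneg _).trans (hxp i).le) (hxp i)
  -- the contraction factor of `F` on the ball of radius `‖x 0‖`
  obtain ⟨i₁, hi₁⟩ := Finite.exists_max fun i => coeffPoly (cc h δ B T i) (n - 1) ‖x 0‖
  set κ := coeffPoly (cc h δ B T i₁) (n - 1) ‖x 0‖
  have hκ0 : 0 ≤ κ := Finset.sum_nonneg fun m hm =>
    mul_nonneg (cc_nonneg hh hT i₁ hm) (pow_nonneg (norm_nonneg _) _)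
  have hdecay := norm_iterate_le_pow_mul (S := {y | InCube y}) hx hx0 hκ0 (hlt i₁).le
    fun y hy hyr => ⟨hoSIS_mem_cube hh hδ hB hT hA7a hy,
      norm_hoSIS_le (by omega) hh hδ hB hT hA7a hy hyr hκ0 hi₁⟩
  refine ⟨fun t => (hdecay t).2.trans (mul_le_of_le_one_left (norm_nonneg _)
    (pow_le_one₀ hκ0 (hlt i₁).le)), ?_⟩
  rw [tendsto_zero_iff_norm_tendsto_zero]
  refine squeeze_zero (fun t => norm_nonneg _) (fun t => (hdecay t).2) ?_
  simpa using (tendsto_pow_atTop_nhds_zero_of_lt_one hκ0 (hlt i₁)).mul_const ‖x 0‖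

end SIS

theorem stmt19_general {n : ℕ} (hn : 3 ≤ n) (h : ℝ) (hh : 0 < h)
    (δ : Fin n → ℝ) (B : Matrix (Fin n) (Fin n) ℝ)
    (T : (k : ℕ) → Fin n → (Fin (k - 1) → Fin n) → ℝ)
    (hδ : ∀ i, 0 < δ i) (hB : ∀ i j, 0 ≤ B i j)
    (hT : ∀ k ∈ Finset.Icc 3 n, ∀ i, ∀ v : Fin (k - 1) → Fin n, 0 ≤ T k i v)
    (hA7a : ∀ i, h * δ i ≤ 1 ∧
      h * ((∑ j, B i j) + ∑ k ∈ Finset.Icc 3 n, ∑ v : Fin (k - 1) → Fin n, T k i v) ≤ 1)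
    (hTirr : ∀ k ∈ Finset.Icc 3 n, TensIrredK k (T k))
    (hd : ∀ i, (∑ j, B i j) < δ i) :
    (∀ i, ∃! y : ℝ, 0 < y ∧
      ∑ m ∈ Finset.Icc 1 (n - 1), cc h δ B T i m * y ^ (m - 1) = 1) ∧
    LocAsympStable (hoSIS h δ B T) 0 ∧
    ∀ p : Fin n → ℝ,
      (∀ i, 0 < p i ∧ ∑ m ∈ Finset.Icc 1 (n - 1), cc h δ B T i m * p i ^ (m - 1) = 1) →
      ∀ x : ℕ → Fin n → ℝ, IsTraj (hoSIS h δ B T) x → InCube (x 0) →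
        ‖x 0‖ < (⨅ i, p i) → Tendsto x atTop (nhds 0) := by
  have : Nonempty (Fin n) := ⟨⟨0, by omega⟩⟩
  have h3 : 3 ∈ Icc 3 n := by simp [hn]
  have hc1 : ∀ i, cc h δ B T i 1 < 1 := fun i => by
    rw [cc_one_eq hh.le (hA7a i).1 (hB i)]
    nlinarith [mul_lt_mul_of_pos_left (hd i) hh]
  have hc2 : ∀ i, 0 < cc h δ B T i 2 := cc_two_pos (by omega) hh (hT 3 h3) (hTirr 3 h3)
  have hroot : ∀ i, ∃! y, 0 < y ∧ coeffPoly (cc h δ B T i) (n - 1) y = 1 := fun i =>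
    existsUnique_coeffPoly_eq_one (by omega) (fun m hm => cc_nonneg hh.le hT i hm) (hc1 i) (hc2 i)
  have hbelow : ∀ p : Fin n → ℝ, (∀ i, coeffPoly (cc h δ B T i) (n - 1) (p i) = 1) →
      ∀ x, IsTraj (hoSIS h δ B T) x → InCube (x 0) → ‖x 0‖ < ⨅ i, p i →
      (∀ t, ‖x t‖ ≤ ‖x 0‖) ∧ Tendsto x atTop (nhds 0) := fun p hp x hx hx0 hxp =>
    hoSIS_tendsto_zero hn hh.le (fun i => (hδ i).le) hB hT hA7a hc2 hp hx hx0
      fun i => hxp.trans_le (ciInf_le (Finite.bddBelow_range p) i)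
  refine ⟨hroot, fun ε hε => ?_, fun p hp x hx hx0 hxp =>
    (hbelow p (fun i => (hp i).2) x hx hx0 hxp).2⟩
  choose p hp using fun i => (hroot i).exists
  obtain ⟨i₀, hi₀⟩ := exists_eq_ciInf_of_finite (f := p)
  refine ⟨min ε (⨅ i, p i), lt_min hε (hi₀ ▸ (hp i₀).1), fun x hx hx0 hxd => ?_⟩
  rw [sub_zero] at hxd
  obtain ⟨hbound, hlim⟩ :=
    hbelow p (fun i => (hp i).2) x hx hx0 (hxd.trans_le (min_le_right _ _))
  exact ⟨fun t => by simpa using (hbound t).trans_lt (hxd.trans_le (min_le_left _ _)), hlim⟩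

/-- with all arrays `F_k` irreducible and `δ_i > Σ_j β_{ij}` for all `i`,
for each `i` the equation `Σ_{m=1}^{n−1} c_{i,m} y^{m−1} = 1` has a unique positive
solution `p_{i+}`, the healthy state is locally asymptotically stable, and every
trajectory starting in `[0,1]^n` with `max_i |x_i(0)| < min_i p_{i+}` converges to `0`. -/
theorem stmt19 {n : ℕ} (hn : 3 ≤ n) (h : ℝ) (hh : 0 < h)
    (δ : Fin n → ℝ) (B : Matrix (Fin n) (Fin n) ℝ)
    (T : (k : ℕ) → Fin n → (Fin (k - 1) → Fin n) → ℝ)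
    (hδ : ∀ i, 0 < δ i) (hB : ∀ i j, 0 ≤ B i j)
    (hT : ∀ k ∈ Finset.Icc 3 n, ∀ i, ∀ v : Fin (k - 1) → Fin n, 0 ≤ T k i v)
    (hA2 : MatIrred B)
    (hA7a : ∀ i, h * δ i ≤ 1 ∧
      h * ((∑ j, B i j) + ∑ k ∈ Finset.Icc 3 n, ∑ v : Fin (k - 1) → Fin n, T k i v) ≤ 1)
    (hTirr : ∀ k ∈ Finset.Icc 3 n, TensIrredK k (T k))
    (hd : ∀ i, (∑ j, B i j) < δ i) :
    (∀ i, ∃! y : ℝ, 0 < y ∧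
      ∑ m ∈ Finset.Icc 1 (n - 1), cc h δ B T i m * y ^ (m - 1) = 1) ∧
    LocAsympStable (hoSIS h δ B T) 0 ∧
    ∀ p : Fin n → ℝ,
      (∀ i, 0 < p i ∧ ∑ m ∈ Finset.Icc 1 (n - 1), cc h δ B T i m * p i ^ (m - 1) = 1) →
      ∀ x : ℕ → Fin n → ℝ, IsTraj (hoSIS h δ B T) x → InCube (x 0) →
        ‖x 0‖ < (⨅ i, p i) → Tendsto x atTop (nhds 0) :=
  stmt19_general hn h hh δ B T hδ hB hT hA7a hTirr hd
end
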